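/- arXiv:2512.18025 — 6 statements merged into one kernel-verified Lean document; each statement's English description precedes it below -/
import Mathlib

section
/- For integers n ≥ 2 and 1 ≤ k ≤ n, the alternating sum ∑_{i=1}^{n} (-1)^{i-1} · C(n, i) · min(i, k) equals (-1)^{k-1} · C(n-2, k-1). -/
private lemma aux_A (m : ℕ) : ∀ s : ℕ,
    ∑ x ∈ Finset.range s, (-1 : ℤ) ^ x * ((m + 2).choose (x + 1) : ℤ)
      = 1 - (-1 : ℤ) ^ s * ((m + 1).choose s : ℤ) := by
  intro s
  induction s with
  | zero => simp
  | succ s ih =>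
      rw [Finset.sum_range_succ, ih]
      have h : (m + 2).choose (s + 1) = (m + 1).choose s + (m + 1).choose (s + 1) :=
        Nat.choose_succ_succ (m + 1) s
      rw [h]
      push_cast
      ring

private lemma aux_main (m : ℕ) (j : ℕ) (hj : j ≤ m + 1) :
    ∑ x ∈ Finset.range (m + 2),
        (-1 : ℤ) ^ x * ((m + 2).choose (x + 1) : ℤ) * min ((x : ℤ) + 1) ((j : ℤ) + 1)
      = (-1 : ℤ) ^ j * (m.choose j : ℤ) := by
  induction j with
  | zero =>
      have h1 : ∀ x ∈ Finset.range (m + 2),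
          (-1 : ℤ) ^ x * ((m + 2).choose (x + 1) : ℤ) * min ((x : ℤ) + 1) (((0 : ℕ) : ℤ) + 1)
            = (-1 : ℤ) ^ x * ((m + 2).choose (x + 1) : ℤ) := by
        intro x _
        have : min ((x : ℤ) + 1) (((0 : ℕ) : ℤ) + 1) = 1 := by push_cast; omega
        rw [this, mul_one]
      rw [Finset.sum_congr rfl h1, aux_A m (m + 2)]
      have h0 : (m + 1).choose (m + 2) = 0 := Nat.choose_succ_self (m + 1)
      rw [h0]
      simp
  | succ j ih =>
      have hsplit : ∀ x ∈ Finset.range (m + 2),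
          (-1 : ℤ) ^ x * ((m + 2).choose (x + 1) : ℤ) * min ((x : ℤ) + 1) (((j + 1 : ℕ) : ℤ) + 1)
            = (-1 : ℤ) ^ x * ((m + 2).choose (x + 1) : ℤ) * min ((x : ℤ) + 1) ((j : ℤ) + 1)
              + (if j + 1 ≤ x then (-1 : ℤ) ^ x * ((m + 2).choose (x + 1) : ℤ) else 0) := by
        intro x _
        split_ifs with h
        · have : min ((x : ℤ) + 1) (((j + 1 : ℕ) : ℤ) + 1)
              = min ((x : ℤ) + 1) ((j : ℤ) + 1) + 1 := by push_cast; omega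
          rw [this]; ring
        · have : min ((x : ℤ) + 1) (((j + 1 : ℕ) : ℤ) + 1)
              = min ((x : ℤ) + 1) ((j : ℤ) + 1) := by push_cast; omega
          rw [this]; ring
      rw [Finset.sum_congr rfl hsplit, Finset.sum_add_distrib, ih (by omega),
        ← Finset.sum_filter]
      have hfil : (Finset.range (m + 2)).filter (fun x => j + 1 ≤ x)
          = Finset.Ico (j + 1) (m + 2) := by
        ext x; simp; omega
      rw [hfil, Finset.sum_Ico_eq_sub _ (by omega : j + 1 ≤ m + 2), aux_A m (m + 2),
        aux_A m (j + 1)]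
      have h0 : (m + 1).choose (m + 2) = 0 := Nat.choose_succ_self (m + 1)
      have h1 : (m + 1).choose (j + 1) = m.choose j + m.choose (j + 1) :=
        Nat.choose_succ_succ m j
      rw [h0, h1]
      push_cast
      ring

/-- For integers `n ≥ 2` and `1 ≤ k ≤ n`, the alternating sum
`∑_{i=1}^{n} (-1)^{i-1} · C(n,i) · min(i,k)` equals `(-1)^{k-1} · C(n-2,k-1)`. -/
theorem alternating_sum_choose_min (n k : ℕ) (hn : 2 ≤ n) (hk1 : 1 ≤ k) (hkn : k ≤ n) :
    ∑ i ∈ Finset.Icc 1 n, (-1 : ℤ) ^ (i - 1) * (n.choose i : ℤ) * (min i k : ℤ) =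
      (-1 : ℤ) ^ (k - 1) * ((n - 2).choose (k - 1) : ℤ) := by
  obtain ⟨m, rfl⟩ : ∃ m, n = m + 2 := ⟨n - 2, by omega⟩
  obtain ⟨j, rfl⟩ : ∃ j, k = j + 1 := ⟨k - 1, by omega⟩
  rw [← Finset.Ico_add_one_right_eq_Icc, Finset.sum_Ico_eq_sum_range]
  simp only [Nat.succ_sub_one, Nat.add_sub_cancel]
  have hcongr : ∀ x ∈ Finset.range (m + 2),
      (-1 : ℤ) ^ (1 + x - 1) * ((m + 2).choose (1 + x) : ℤ)
          * min (((1 + x : ℕ)) : ℤ) (((j + 1 : ℕ)) : ℤ)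
        = (-1 : ℤ) ^ x * ((m + 2).choose (x + 1) : ℤ) * min ((x : ℤ) + 1) ((j : ℤ) + 1) := by
    intro x _
    rw [Nat.add_comm 1 x]
    simp only [Nat.add_sub_cancel]
    push_cast
    ring
  rw [Finset.sum_congr rfl hcongr]
  exact aux_main m j (by omega)
end

section
/- For an (n,k) MDS code over F_q with uniformly random message, the multivariate mutual information (McGill's MMI) of the n codeword symbols equals (-1)^{k-1} · C(n-2, k-1) · log q. In particular, when n = k the MMI is 0. -/
lemma alt_partial (m : ℕ) : ∀ r : ℕ, ∑ i ∈ Finset.range (r+1), (-1:ℝ)^i * ((m+1).choose i) = (-1)^r * (m.choose r) := by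
  intro r
  induction r with
  | zero => simp
  | succ r ih =>
    rw [Finset.sum_range_succ, ih, Nat.choose_succ_succ]
    push_cast
    ring

lemma key (m r : ℕ) (hr : r ≤ m + 1) :
    ∑ j ∈ Finset.range (m+3), (-1:ℝ)^(j-1) * ((m+2).choose j) * ((min j (r+1) : ℕ):ℝ)
      = (-1:ℝ)^r * (m.choose r) := by
  have htot : ∑ j ∈ Finset.range (m+3), (-1:ℝ)^j * ((m+2).choose j) = 0 := by
    have h := Int.alternating_sum_range_choose (n := m+2)
    rw [if_neg (by omega)] at h
    exact_mod_cast h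
  have hinner : ∀ i, i ≤ m+1 →
      ∑ j ∈ Finset.Ico (i+1) (m+3), (-1:ℝ)^(j-1) * ((m+2).choose j)
        = (-1:ℝ)^i * ((m+1).choose i) := by
    intro i hi
    have h1 : ∑ j ∈ Finset.Ico (i+1) (m+3), (-1:ℝ)^(j-1) * ((m+2).choose j)
        = -∑ j ∈ Finset.Ico (i+1) (m+3), (-1:ℝ)^j * ((m+2).choose j) := by
      rw [← Finset.sum_neg_distrib]
      refine Finset.sum_congr rfl fun j hj => ?_
      simp only [Finset.mem_Ico] at hj
      obtain ⟨j, rfl⟩ : ∃ j', j = j'+1 := ⟨j-1, by omega⟩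
      simp [pow_succ]
    have h2 : ∑ j ∈ Finset.range (i+1), (-1:ℝ)^j * ((m+2).choose j)
        + ∑ j ∈ Finset.Ico (i+1) (m+3), (-1:ℝ)^j * ((m+2).choose j) = 0 := by
      rw [Finset.range_eq_Ico, Finset.sum_Ico_consecutive _ (by omega) (by omega),
        ← Finset.range_eq_Ico]
      exact htot
    have h3 := alt_partial (m+1) i
    rw [h1]
    linarith
  have hmin : ∀ j : ℕ, ((min j (r+1) : ℕ):ℝ) = ∑ i ∈ Finset.range (r+1), if i < j then (1:ℝ) else 0 := by
    intro j
    rw [Finset.sum_boole]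
    have : (Finset.range (r+1)).filter (· < j) = Finset.range (min (r+1) j) := by
      ext i
      simp [Nat.lt_min]
    rw [this]
    simp [Nat.min_comm]
  have e1 : ∀ j ∈ Finset.range (m+3), (-1:ℝ)^(j-1) * ((m+2).choose j) * ((min j (r+1):ℕ):ℝ)
      = ∑ i ∈ Finset.range (r+1), (if i < j then (-1:ℝ)^(j-1) * ((m+2).choose j) else 0) := by
    intro j _
    rw [hmin, Finset.mul_sum]
    exact Finset.sum_congr rfl fun i _ => by split <;> simp
  rw [Finset.sum_congr rfl e1, Finset.sum_comm]
  have e2 : ∀ i ∈ Finset.range (r+1),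
      ∑ j ∈ Finset.range (m+3), (if i < j then (-1:ℝ)^(j-1) * ((m+2).choose j) else 0)
        = (-1:ℝ)^i * ((m+1).choose i) := by
    intro i hi
    simp only [Finset.mem_range] at hi
    rw [← Finset.sum_filter]
    rw [show (Finset.range (m+3)).filter (i < ·) = Finset.Ico (i+1) (m+3) by
      ext j; simp [Finset.mem_Ico]; omega]
    exact hinner i (by omega)
  rw [Finset.sum_congr rfl e2]
  exact alt_partial m r

/-- For an `(n,k)` MDS code over `F_q` with a uniformly random message, so that every
nonempty subset `S` of the `n` codeword symbols has entropy `H S = min(|S|,k) · log q`,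
McGill's multivariate mutual information `∑_{∅≠S} (-1)^{|S|-1} H(S)` equals
`(-1)^{k-1} · C(n-2, k-1) · log q`; in particular it is `0` when `n = k`. -/
theorem mds_mcgill_mmi (n k q : ℕ) (hn : 2 ≤ n) (hk1 : 1 ≤ k) (hkn : k ≤ n) (hq : 1 < q)
    (H : Finset (Fin n) → ℝ)
    (hH : ∀ S : Finset (Fin n), S.Nonempty → H S = (min S.card k : ℝ) * Real.log q) :
    ∑ S ∈ (Finset.univ : Finset (Finset (Fin n))).erase ∅, (-1 : ℝ) ^ (S.card - 1) * H S =
      (-1 : ℝ) ^ (k - 1) * ((n - 2).choose (k - 1) : ℝ) * Real.log q ∧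
    (n = k →
      ∑ S ∈ (Finset.univ : Finset (Finset (Fin n))).erase ∅,
        (-1 : ℝ) ^ (S.card - 1) * H S = 0) := by
  have hmain : ∑ S ∈ (Finset.univ : Finset (Finset (Fin n))).erase ∅, (-1 : ℝ) ^ (S.card - 1) * H S =
      (-1 : ℝ) ^ (k - 1) * ((n - 2).choose (k - 1) : ℝ) * Real.log q := by
    obtain ⟨m, rfl⟩ : ∃ m, n = m + 2 := ⟨n-2, by omega⟩
    obtain ⟨r, rfl⟩ : ∃ r, k = r + 1 := ⟨k-1, by omega⟩
    set f : ℕ → ℝ := fun j => (-1:ℝ)^(j-1) * ((min j (r+1):ℕ):ℝ) * Real.log q with hf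
    have step1 : ∑ S ∈ (Finset.univ : Finset (Finset (Fin (m+2)))).erase ∅,
        (-1 : ℝ) ^ (S.card - 1) * H S
        = ∑ S ∈ (Finset.univ : Finset (Finset (Fin (m+2)))).erase ∅, f S.card := by
      refine Finset.sum_congr rfl fun S hS => ?_
      rw [hH S (Finset.nonempty_of_ne_empty (Finset.mem_erase.1 hS).1), hf]
      simp only [Nat.cast_min]
      ring
    have step2 : ∑ S ∈ (Finset.univ : Finset (Finset (Fin (m+2)))).erase ∅, f S.card
        = ∑ S : Finset (Fin (m+2)), f S.card := by
      apply Finset.sum_erase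
      simp only [hf, Finset.card_empty, Nat.zero_min, Nat.cast_zero, mul_zero, zero_mul]
    have step3 : ∑ S : Finset (Fin (m+2)), f S.card
        = ∑ j ∈ Finset.range (m+3), ((m+2).choose j : ℝ) * f j := by
      rw [← Finset.powerset_univ, Finset.sum_powerset]
      rw [Finset.card_univ, Fintype.card_fin]
      refine Finset.sum_congr rfl fun j _ => ?_
      rw [Finset.sum_powersetCard, Finset.card_univ, Fintype.card_fin, nsmul_eq_mul]
    rw [step1, step2, step3]
    have step4 : ∑ j ∈ Finset.range (m+3), ((m+2).choose j : ℝ) * f j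
        = (∑ j ∈ Finset.range (m+3), (-1:ℝ)^(j-1) * ((m+2).choose j) * ((min j (r+1):ℕ):ℝ)) * Real.log q := by
      rw [Finset.sum_mul]
      exact Finset.sum_congr rfl fun j _ => by rw [hf]; ring
    rw [step4, key m r (by omega)]
    norm_num
  refine ⟨hmain, fun h => ?_⟩
  rw [hmain]
  rw [Nat.choose_eq_zero_of_lt (by omega)]
  simp
end

section
/- Let Z_V = (Z_1, …, Z_n) be random variables such that H(Z_S) = min(|S|, k) · log q for every nonempty S ⊆ {1,…,n}, with 1 ≤ k ≤ n and n ≥ 2. For any partition P of {1,…,n} into at least 2 nonempty parts, define I_P(Z_V) = (∑_{C ∈ P} H(Z_C) − H(Z_V)) / (|P| − 1). Then the minimum of I_P over all such partitions equals ((n−k)/(n−1)) · log q, and this minimum is attained by the singleton partition. -/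
/-- `P` is a partition of `{1,…,n}` (as `Fin n`) into pairwise disjoint nonempty blocks. -/
def IsPartition {n : ℕ} (P : Finset (Finset (Fin n))) : Prop :=
  (∀ C ∈ P, C.Nonempty) ∧
  (∀ C ∈ P, ∀ D ∈ P, C ≠ D → Disjoint C D) ∧
  P.sup id = Finset.univ

lemma block_ineq (n k c : ℕ) (hn : 2 ≤ n) (hk1 : 1 ≤ k) (hkn : k ≤ n)
    (hc1 : 1 ≤ c) (hcn : c ≤ n) :
    (1 : ℝ) + ((c : ℝ) - 1) * ((k : ℝ) - 1) / ((n : ℝ) - 1) ≤ (min c k : ℝ) := by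
  have hn1 : (1 : ℝ) < (n : ℝ) := by exact_mod_cast Nat.lt_of_lt_of_le one_lt_two hn
  have hpos : (0 : ℝ) < (n : ℝ) - 1 := by linarith
  have hc1' : (1:ℝ) ≤ c := by exact_mod_cast hc1
  have hcn' : (c:ℝ) ≤ n := by exact_mod_cast hcn
  have hk1' : (1:ℝ) ≤ k := by exact_mod_cast hk1
  have hkn' : (k:ℝ) ≤ n := by exact_mod_cast hkn
  rw [show (1 : ℝ) + ((c : ℝ) - 1) * ((k : ℝ) - 1) / ((n : ℝ) - 1)
      = (((n:ℝ) - 1) + ((c : ℝ) - 1) * ((k : ℝ) - 1)) / ((n : ℝ) - 1) by field_simp,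
    div_le_iff₀ hpos]
  rcases le_total (c:ℝ) (k:ℝ) with h | h
  · rw [min_eq_left h]; nlinarith
  · rw [min_eq_right h]; nlinarith

/-- With the MDS entropy profile `H S = min(|S|,k) log q`, the minimum over all partitions
`P` (with at least two blocks) of `I_P = (∑_{C∈P} H(C) − H(V))/(|P|−1)` equals
`((n−k)/(n−1)) log q`, and the minimum is attained by the singleton partition. -/
theorem mds_key_capacity (n k q : ℕ) (hn : 2 ≤ n) (hk1 : 1 ≤ k) (hkn : k ≤ n) (hq : 1 < q)
    (H : Finset (Fin n) → ℝ)
    (hH : ∀ S : Finset (Fin n), S.Nonempty → H S = (min S.card k : ℝ) * Real.log q) :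
    (∀ P : Finset (Finset (Fin n)), IsPartition P → 2 ≤ P.card →
      ((n : ℝ) - k) / ((n : ℝ) - 1) * Real.log q ≤
        ((∑ C ∈ P, H C) - H Finset.univ) / ((P.card : ℝ) - 1)) ∧
    IsPartition (Finset.univ.image fun i : Fin n => ({i} : Finset (Fin n))) ∧
    ((∑ C ∈ Finset.univ.image (fun i : Fin n => ({i} : Finset (Fin n))), H C) -
        H Finset.univ) /
      (((Finset.univ.image fun i : Fin n => ({i} : Finset (Fin n))).card : ℝ) - 1) =
      ((n : ℝ) - k) / ((n : ℝ) - 1) * Real.log q := by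
  have hne : Nonempty (Fin n) := ⟨⟨0, by omega⟩⟩
  have hL : 0 < Real.log q := Real.log_pos (by exact_mod_cast hq)
  have hn1 : (1 : ℝ) < (n : ℝ) := by exact_mod_cast Nat.lt_of_lt_of_le one_lt_two hn
  have hpos : (0 : ℝ) < (n : ℝ) - 1 := by linarith
  have huniv : H Finset.univ = (k : ℝ) * Real.log q := by
    rw [hH _ Finset.univ_nonempty, Finset.card_univ, Fintype.card_fin,
      min_eq_right (by exact_mod_cast hkn : (k : ℝ) ≤ (n : ℝ))]
  have hinj : Function.Injective (fun i : Fin n => ({i} : Finset (Fin n))) :=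
    fun a b h => by simpa using h
  constructor
  · intro P hP hm
    obtain ⟨hPne, hPdisj, hPsup⟩ := hP
    have hcard : ∑ C ∈ P, C.card = n := by
      have h1 : (P.biUnion id).card = ∑ C ∈ P, (id C).card :=
        Finset.card_biUnion (fun C hC D hD hCD => hPdisj C hC D hD hCD)
      rw [← Finset.sup_eq_biUnion, hPsup, Finset.card_univ, Fintype.card_fin] at h1
      simpa using h1.symm
    have hcardR : ∑ C ∈ P, ((C.card : ℝ)) = (n : ℝ) := by exact_mod_cast hcard
    have hm' : (2 : ℝ) ≤ (P.card : ℝ) := by exact_mod_cast hm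
    have hmpos : (0 : ℝ) < (P.card : ℝ) - 1 := by linarith
    set L := Real.log q
    set S : ℝ := ∑ C ∈ P, (min C.card k : ℝ) with hS
    have hsumH : ∑ C ∈ P, H C = S * L := by
      rw [hS, Finset.sum_mul]
      exact Finset.sum_congr rfl (fun C hC => hH C (hPne C hC))
    have hkey : (P.card : ℝ) + ((n : ℝ) - P.card) * ((k : ℝ) - 1) / ((n : ℝ) - 1) ≤ S := by
      have h2 : ∀ C ∈ P, (1 : ℝ) + ((C.card : ℝ) - 1) * ((k : ℝ) - 1) / ((n : ℝ) - 1)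
          ≤ (min C.card k : ℝ) := by
        intro C hC
        exact block_ineq n k C.card hn hk1 hkn (Finset.card_pos.2 (hPne C hC))
          (by simpa using Finset.card_le_card (Finset.subset_univ C))
      have h3 := Finset.sum_le_sum h2
      calc (P.card : ℝ) + ((n : ℝ) - P.card) * ((k : ℝ) - 1) / ((n : ℝ) - 1)
          = ∑ C ∈ P, ((1 : ℝ) + ((C.card : ℝ) - 1) * ((k : ℝ) - 1) / ((n : ℝ) - 1)) := by
            rw [Finset.sum_add_distrib, Finset.sum_const, nsmul_eq_mul, mul_one]
            rw [← Finset.sum_div, ← Finset.sum_mul, Finset.sum_sub_distrib,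
              Finset.sum_const, nsmul_eq_mul, mul_one, hcardR]
        _ ≤ S := h3
    have hid : ((P.card : ℝ) + ((n : ℝ) - P.card) * ((k : ℝ) - 1) / ((n : ℝ) - 1))
        * ((n : ℝ) - 1)
        = (P.card : ℝ) * ((n : ℝ) - 1) + ((n : ℝ) - P.card) * ((k : ℝ) - 1) := by
      field_simp
    have hS2 : (P.card : ℝ) * ((n : ℝ) - 1) + ((n : ℝ) - P.card) * ((k : ℝ) - 1)
        ≤ S * ((n : ℝ) - 1) := by
      rw [← hid]
      exact mul_le_mul_of_nonneg_right hkey hpos.le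
    rw [hsumH, huniv, show S * L - (k : ℝ) * L = (S - k) * L by ring,
      show (S - (k : ℝ)) * L / ((P.card : ℝ) - 1) = (S - k) / ((P.card : ℝ) - 1) * L by ring]
    apply mul_le_mul_of_nonneg_right _ hL.le
    rw [div_le_div_iff₀ hpos hmpos]
    nlinarith [hS2]
  constructor
  · refine ⟨?_, ?_, ?_⟩
    · intro C hC
      obtain ⟨i, _, rfl⟩ := Finset.mem_image.1 hC
      exact Finset.singleton_nonempty i
    · intro C hC D hD hCD
      obtain ⟨i, _, rfl⟩ := Finset.mem_image.1 hC
      obtain ⟨j, _, rfl⟩ := Finset.mem_image.1 hD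
      simp only [Finset.disjoint_singleton]
      intro h; exact hCD (by rw [h])
    · apply Finset.eq_univ_of_forall
      intro x
      have h1 : ({x} : Finset (Fin n)) ≤ (Finset.univ.image fun i : Fin n =>
          ({i} : Finset (Fin n))).sup id :=
        Finset.le_sup (f := id) (Finset.mem_image.2 ⟨x, Finset.mem_univ x, rfl⟩)
      exact h1 (Finset.mem_singleton_self x)
  · have hcardP : ((Finset.univ.image fun i : Fin n => ({i} : Finset (Fin n))).card : ℝ)
        = (n : ℝ) := by
      rw [Finset.card_image_of_injective _ hinj, Finset.card_univ, Fintype.card_fin]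
    have hsum : (∑ C ∈ Finset.univ.image (fun i : Fin n => ({i} : Finset (Fin n))), H C)
        = (n : ℝ) * Real.log q := by
      rw [Finset.sum_image (fun a _ b _ h => hinj h)]
      have : ∀ i : Fin n, H {i} = Real.log q := by
        intro i
        rw [hH _ (Finset.singleton_nonempty i), Finset.card_singleton]
        push_cast
        rw [min_eq_left (by exact_mod_cast hk1 : (1 : ℝ) ≤ (k : ℝ)), one_mul]
      rw [Finset.sum_congr rfl (fun i _ => this i), Finset.sum_const, nsmul_eq_mul,
        Finset.card_univ, Fintype.card_fin]
    rw [hsum, huniv, hcardP]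
    field_simp
end

section
/- Under the entropy profile of an (n,k) MDS code, for any partition P of {1,…,n} with |P| ≥ 2 in which every part is a singleton except possibly one part, the quantity I_P(Z_V) = (∑_{C ∈ P} H(Z_C) − H(Z_V))/(|P|−1) satisfies I_P(Z_V) ≥ ((n−k)/(n−1)) log q. -/
/-- Under the MDS entropy profile `H S = min(|S|,k) log q` (with `q > 1`), for any partition
`P` of `{1,…,n}` with `|P| ≥ 2` in which every block is a singleton except possibly one,
`I_P = (∑_{C∈P} H(C) − H(V))/(|P|−1) ≥ ((n−k)/(n−1)) log q`. -/
theorem mds_almost_singleton_partition_bound (n k q : ℕ) (hn : 2 ≤ n) (hk1 : 1 ≤ k)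
    (hkn : k ≤ n) (hq : 1 < q) (H : Finset (Fin n) → ℝ)
    (hH : ∀ S : Finset (Fin n), S.Nonempty → H S = (min S.card k : ℝ) * Real.log q)
    (P : Finset (Finset (Fin n))) (hP : IsPartition P) (hP2 : 2 ≤ P.card)
    (hsing : ∀ C ∈ P, ∀ D ∈ P, 1 < C.card → 1 < D.card → C = D) :
    ((n : ℝ) - k) / ((n : ℝ) - 1) * Real.log q ≤
      ((∑ C ∈ P, H C) - H Finset.univ) / ((P.card : ℝ) - 1) := by
  obtain ⟨hne, hdisj, hcover⟩ := hP
  have hq1 : (1 : ℝ) < q := by exact_mod_cast hq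
  have hL : 0 < Real.log q := Real.log_pos hq1
  set L := Real.log q with hLdef
  -- sum of cards = n
  have hsum_card : ∑ C ∈ P, C.card = n := by
    have h1 : (P.biUnion id).card = ∑ C ∈ P, C.card :=
      Finset.card_biUnion (fun C hC D hD h => hdisj C hC D hD h)
    rw [← h1, ← Finset.sup_eq_biUnion, hcover, Finset.card_univ, Fintype.card_fin]
  have hm_le : P.card ≤ n := by
    calc P.card = ∑ _ ∈ P, 1 := by simp
    _ ≤ ∑ C ∈ P, C.card := Finset.sum_le_sum (fun C hC => (hne C hC).card_pos)
    _ = n := hsum_card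
  haveI : Nonempty (Fin n) := ⟨⟨0, by omega⟩⟩
  have hHuniv : H Finset.univ = (k : ℝ) * L := by
    rw [hH Finset.univ Finset.univ_nonempty, Finset.card_univ, Fintype.card_fin,
      min_eq_right (show (k : ℝ) ≤ (n : ℝ) by exact_mod_cast hkn)]
  have hm1 : (0 : ℝ) < (P.card : ℝ) - 1 := by
    have : (2 : ℝ) ≤ (P.card : ℝ) := by exact_mod_cast hP2
    linarith
  have hn1 : (0 : ℝ) < (n : ℝ) - 1 := by
    have : (2 : ℝ) ≤ (n : ℝ) := by exact_mod_cast hn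
    linarith
  have hnk : (0 : ℝ) ≤ (n : ℝ) - k := by
    have : (k : ℝ) ≤ (n : ℝ) := by exact_mod_cast hkn
    linarith
  have hmn : (P.card : ℝ) ≤ (n : ℝ) := by exact_mod_cast hm_le
  rw [div_mul_eq_mul_div, div_le_div_iff₀ hn1 hm1]
  by_cases hbig : ∃ C₀ ∈ P, k < C₀.card
  · -- some block exceeds k
    obtain ⟨C₀, hC₀, hC₀k⟩ := hbig
    have hsum : ∑ C ∈ P, H C = (k : ℝ) * L + ((P.card : ℝ) - 1) * L := by
      rw [← Finset.sum_erase_add _ _ hC₀]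
      have h1 : ∀ D ∈ P.erase C₀, H D = L := by
        intro D hD
        have hDP : D ∈ P := Finset.mem_of_mem_erase hD
        have hDne : D ≠ C₀ := Finset.ne_of_mem_erase hD
        have hD1 : D.card = 1 := by
          by_contra h
          have h2 : 1 < D.card := lt_of_le_of_ne (hne D hDP).card_pos (Ne.symm h)
          exact hDne (hsing D hDP C₀ hC₀ h2 (lt_of_le_of_lt hk1 hC₀k))
        rw [hH D (hne D hDP), hD1,
          min_eq_left (show ((1:ℕ) : ℝ) ≤ (k : ℝ) by exact_mod_cast hk1)]
        simp
      rw [Finset.sum_congr rfl h1, Finset.sum_const, Finset.card_erase_of_mem hC₀,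
        hH C₀ (hne C₀ hC₀),
        min_eq_right (show (k : ℝ) ≤ (C₀.card : ℝ) by exact_mod_cast le_of_lt hC₀k)]
      have : ((P.card - 1 : ℕ) : ℝ) = (P.card : ℝ) - 1 := by
        have : 1 ≤ P.card := le_trans (by norm_num) hP2
        push_cast [this]; ring
      rw [nsmul_eq_mul, this]; ring
    rw [hsum, hHuniv]
    have hkn1 : (n : ℝ) - k ≤ (n : ℝ) - 1 := by
      have : (1 : ℝ) ≤ (k : ℝ) := by exact_mod_cast hk1
      linarith
    have : ((k : ℝ) * L + ((P.card : ℝ) - 1) * L - (k : ℝ) * L) = ((P.card : ℝ) - 1) * L := by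
      ring
    rw [this]
    nlinarith [mul_pos hm1 hL]
  · -- all blocks have card ≤ k
    push_neg at hbig
    have hsum : ∑ C ∈ P, H C = (n : ℝ) * L := by
      have h1 : ∀ C ∈ P, H C = (C.card : ℝ) * L := by
        intro C hC
        rw [hH C (hne C hC),
          min_eq_left (show ((C.card:ℕ) : ℝ) ≤ (k : ℝ) by exact_mod_cast hbig C hC)]
      rw [Finset.sum_congr rfl h1, ← Finset.sum_mul]
      congr 1
      exact_mod_cast congrArg (Nat.cast (R := ℝ)) hsum_card
    rw [hsum, hHuniv]
    have : ((n : ℝ) * L - (k : ℝ) * L) = ((n : ℝ) - k) * L := by ring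
    rw [this]
    nlinarith [mul_nonneg hnk hL.le]
end

section
/- Let q be a prime power, F_q a finite field, 1 ≤ k ≤ n ≤ q−1, and let α_1, …, α_n ∈ F_q be pairwise distinct. For any secret s ∈ F_q and any function f(x) = s + ∑_{j=1}^{k-1} a_j x^j with a_1,…,a_{k-1} drawn independently and uniformly from F_q, and any subset T ⊆ {1,…,n} with |T| ≤ k−1, the tuple (f(α_i))_{i ∈ T} is uniformly distributed on F_q^{|T|}, independently of s. Consequently, the shares in T are statistically independent of the secret s when s is also random. -/
/-!
The share vector is `s` plus the image of the uniform coefficient vector under the additive map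
`a ↦ (∑ⱼ aⱼ αᵢ^(j+1))ᵢ`. This map is onto `F^T`: interpolate the values `yᵢ / αᵢ` at the
`|T| ≤ k - 1` distinct nodes by a polynomial of degree `< k - 1` and multiply by `X`. The image of
the uniform distribution under a surjective affine map of finite groups is uniform, because
translating by an element of the image leaves it unchanged.
-/

open scoped Classical

open Polynomial

theorem PMF.eq_uniformOfFintype_of_apply_eq {α : Type*} [Fintype α] [Nonempty α] (p : PMF α)
    (hp : ∀ a b, p a = p b) : p = PMF.uniformOfFintype α := by
  obtain ⟨a₀⟩ := ‹Nonempty α›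
  have hsum : (Fintype.card α : ENNReal) * p a₀ = 1 := by
    rw [← p.tsum_coe, tsum_fintype, ← Finset.card_univ, ← nsmul_eq_mul, ← Finset.sum_const]
    exact Finset.sum_congr rfl fun a _ => (hp a a₀).symm
  ext a
  rw [PMF.uniformOfFintype_apply, hp a a₀]
  exact ENNReal.eq_inv_of_mul_eq_one_left (by rwa [mul_comm])

theorem PMF.map_add_uniformOfFintype_of_surjective {A B : Type*} [AddGroup A] [Fintype A]
    [AddGroup B] [Fintype B] (φ : A →+ B) (hφ : Function.Surjective φ) (c : B) :
    PMF.map (fun a => c + φ a) (PMF.uniformOfFintype A) = PMF.uniformOfFintype B := by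
  set p := PMF.map (fun a => c + φ a) (PMF.uniformOfFintype A)
  have hinv : ∀ y a₀, p (y + φ a₀) = p y := by
    intro y a₀
    simp only [p, PMF.map_apply, PMF.uniformOfFintype_apply]
    rw [← (Equiv.addRight a₀).tsum_eq]
    simp [map_add, ← add_assoc]
  refine p.eq_uniformOfFintype_of_apply_eq fun y y' => ?_
  obtain ⟨a₀, ha₀⟩ := hφ (-y' + y)
  rw [← hinv y' a₀, ha₀, add_neg_cancel_left]

def powSuccEval {R ι : Type*} [CommSemiring R] (x : ι → R) (m : ℕ) : (Fin m → R) →+ (ι → R) where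
  toFun a i := ∑ j, a j * x i ^ ((j : ℕ) + 1)
  map_zero' := by ext; simp
  map_add' a b := by ext i; simp [add_mul, Finset.sum_add_distrib]

theorem powSuccEval_surjective {F ι : Type*} [Field F] [Fintype ι] {x : ι → F}
    (hx : Function.Injective x) (hx0 : ∀ i, x i ≠ 0) {m : ℕ} (hm : Fintype.card ι ≤ m) :
    Function.Surjective (powSuccEval x m) := by
  intro y
  set P := Lagrange.interpolate Finset.univ x (fun i => y i / x i)
  have hP : P ∈ degreeLT F m := by
    rw [mem_degreeLT]
    refine (Lagrange.degree_interpolate_lt _ hx.injOn).trans_le ?_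
    exact_mod_cast hm
  refine ⟨degreeLTEquiv F m ⟨P, hP⟩, funext fun i => ?_⟩
  have hPi : P.eval (x i) = y i / x i :=
    Lagrange.eval_interpolate_at_node _ hx.injOn (Finset.mem_univ i)
  simp_rw [powSuccEval, AddMonoidHom.coe_mk, ZeroHom.coe_mk, pow_succ, ← mul_assoc,
    ← Finset.sum_mul, ← eval_eq_sum_degreeLTEquiv hP, hPi, div_mul_cancel₀ _ (hx0 i)]

theorem shamir_perfect_secrecy_general {F : Type*} [Field F] [Fintype F]
    (n k : ℕ) (α : Fin n → F) (hα : Function.Injective α) (hα0 : ∀ i, α i ≠ 0)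
    (T : Finset (Fin n)) (hT : T.card ≤ k - 1) (s : F) :
    PMF.map
        (fun a : Fin (k - 1) → F =>
          fun i : ↥T => s + ∑ j : Fin (k - 1), a j * (α i) ^ ((j : ℕ) + 1))
        (PMF.uniformOfFintype (Fin (k - 1) → F)) =
      PMF.uniformOfFintype (↥T → F) :=
  PMF.map_add_uniformOfFintype_of_surjective _
    (powSuccEval_surjective (x := fun i : T => α i) (hα.comp Subtype.val_injective)
      (fun i => hα0 i) (by rwa [Fintype.card_coe])) (fun _ => s)

/-- Perfect secrecy of Shamir / Reed–Solomon secret sharing: with `f(x) = s + ∑_{j=1}^{k-1} a_j x^j`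
for independently uniform coefficients `a_1,…,a_{k-1}` and pairwise distinct nonzero evaluation
points `α_1,…,α_n`, for every subset `T` with `|T| ≤ k−1` and every secret `s`, the tuple of
shares `(f(α_i))_{i∈T}` is uniform on `F_q^{|T|}` — in particular its distribution does not
depend on `s`, so at most `k−1` shares are statistically independent of the secret. -/
theorem shamir_perfect_secrecy {F : Type*} [Field F] [Fintype F] [DecidableEq F]
    (q n k : ℕ) (hq : Fintype.card F = q) (hk : 1 ≤ k) (hkn : k ≤ n) (hn : n ≤ q - 1)
    (α : Fin n → F) (hα : Function.Injective α) (hα0 : ∀ i, α i ≠ 0)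
    (T : Finset (Fin n)) (hT : T.card ≤ k - 1) (s : F) :
    PMF.map
        (fun a : Fin (k - 1) → F =>
          fun i : ↥T => s + ∑ j : Fin (k - 1), a j * (α i) ^ ((j : ℕ) + 1))
        (PMF.uniformOfFintype (Fin (k - 1) → F)) =
      PMF.uniformOfFintype (↥T → F) :=
  shamir_perfect_secrecy_general n k α hα hα0 T hT s
end

section
/- Let Z_V = (Z_1,…,Z_n) be finitely-valued random variables with H(Z_S) = min(|S|,k) log q for all nonempty S, where 2 ≤ |A| ≤ n for an active set A and h = n − |A|. Then the partition-based upper bound on secret key capacity satisfies: min over partitions P with every block meeting A and |P| ≥ 2 of I_P(Z_V) is at most log q if k ≤ h + 1, and at most ((n−k)/(|A|−1)) log q if k > h + 1. -/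
/-- Under the MDS entropy profile `H S = min(|S|,k) log q`, with active set `A`
(`2 ≤ |A| ≤ n`) and `h = n − |A|` helpers, the minimum of
`I_P = (∑_{C∈P} H(C) − H(V))/(|P|−1)` over admissible partitions (every block meets `A`,
at least two blocks) is at most `log q` when `k ≤ h + 1`, and at most
`((n−k)/(|A|−1)) log q` when `k > h + 1`: there is an admissible partition witnessing the
bound. -/
theorem mds_helper_capacity_upper_bound (n k q : ℕ) (hn : 2 ≤ n) (hk1 : 1 ≤ k) (hkn : k ≤ n)
    (hq : 1 < q) (H : Finset (Fin n) → ℝ)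
    (hH : ∀ S : Finset (Fin n), S.Nonempty → H S = (min S.card k : ℝ) * Real.log q)
    (A : Finset (Fin n)) (hA : 2 ≤ A.card) :
    ∃ P : Finset (Finset (Fin n)), IsPartition P ∧ 2 ≤ P.card ∧
      (∀ C ∈ P, (C ∩ A).Nonempty) ∧
      ((∑ C ∈ P, H C) - H Finset.univ) / ((P.card : ℝ) - 1) ≤
        (if k ≤ (n - A.card) + 1 then Real.log q
         else ((n : ℝ) - k) / ((A.card : ℝ) - 1) * Real.log q) := by
  obtain ⟨a, ha⟩ := Finset.card_pos.mp (by omega : 0 < A.card)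
  have hcn : A.card ≤ n := by
    simpa using Finset.card_le_univ A
  set S := A.erase a with hSdef
  set B : Finset (Fin n) := Aᶜ ∪ {a} with hBdef
  have haS : a ∉ S := Finset.notMem_erase a A
  have haB : a ∈ B := by simp [hBdef]
  have hScard : S.card = A.card - 1 := Finset.card_erase_of_mem ha
  have hBcard : B.card = n - A.card + 1 := by
    rw [hBdef, Finset.card_union_of_disjoint (by simp [Finset.disjoint_singleton_right, ha])]
    simp [Finset.card_compl]
  have hmemS : ∀ x ∈ S, x ∈ A ∧ x ≠ a := by
    intro x hx
    exact ⟨Finset.mem_of_mem_erase hx, Finset.ne_of_mem_erase hx⟩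
  have hxB : ∀ x ∈ S, x ∉ B := by
    intro x hx
    obtain ⟨hxA, hxa⟩ := hmemS x hx
    simp [hBdef, hxA, hxa]
  set P : Finset (Finset (Fin n)) := S.image (fun x => ({x} : Finset (Fin n))) ∪ {B} with hPdef
  have hBnotim : B ∉ S.image (fun x => ({x} : Finset (Fin n))) := by
    intro hmem
    obtain ⟨x, hx, hxe⟩ := Finset.mem_image.mp hmem
    exact hxB x hx (hxe ▸ Finset.mem_singleton_self x)
  have hinj : Set.InjOn (fun x => ({x} : Finset (Fin n))) S := by
    intro x _ y _ h
    simpa using h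
  have hPcard : P.card = A.card := by
    rw [hPdef, Finset.card_union_of_disjoint (by simp [hBnotim]),
      Finset.card_image_of_injOn hinj, Finset.card_singleton, hScard]
    omega
  have hmemP : ∀ C ∈ P, (∃ x ∈ S, C = {x}) ∨ C = B := by
    intro C hC
    rcases Finset.mem_union.mp hC with h | h
    · obtain ⟨x, hx, hxe⟩ := Finset.mem_image.mp h
      exact Or.inl ⟨x, hx, hxe.symm⟩
    · exact Or.inr (Finset.mem_singleton.mp h)
  refine ⟨P, ⟨?_, ?_, ?_⟩, ?_, ?_, ?_⟩
  · -- nonempty blocks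
    intro C hC
    rcases hmemP C hC with ⟨x, _, rfl⟩ | rfl
    · exact Finset.singleton_nonempty x
    · exact ⟨a, haB⟩
  · -- pairwise disjoint
    intro C hC D hD hne
    rcases hmemP C hC with ⟨x, hx, rfl⟩ | rfl <;>
      rcases hmemP D hD with ⟨y, hy, rfl⟩ | rfl
    · simp only [Finset.disjoint_singleton]
      intro h; exact hne (by rw [h])
    · simp [Finset.disjoint_singleton_left, hxB x hx]
    · simp [Finset.disjoint_singleton_right, hxB y hy]
    · exact absurd rfl hne
  · -- sup = univ
    apply Finset.eq_univ_iff_forall.mpr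
    intro v
    rw [Finset.mem_sup]
    by_cases hvA : v ∈ A
    · by_cases hva : v = a
      · refine ⟨B, Finset.mem_union_right _ (Finset.mem_singleton_self B), ?_⟩
        simp only [id]; rw [hva]; exact haB
      · refine ⟨{v}, Finset.mem_union_left _ ?_, by simp⟩
        exact Finset.mem_image_of_mem _ (Finset.mem_erase.mpr ⟨hva, hvA⟩)
    · exact ⟨B, Finset.mem_union_right _ (Finset.mem_singleton_self B),
        by simp [hBdef, hvA]⟩
  · rw [hPcard]; exact hA
  · -- every block meets A
    intro C hC
    rcases hmemP C hC with ⟨x, hx, rfl⟩ | rfl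
    · exact ⟨x, by simp [(hmemS x hx).1]⟩
    · exact ⟨a, by simp [haB, ha]⟩
  · -- the bound
    have hcast : ((n - A.card + 1 : ℕ) : ℝ) = (n : ℝ) - A.card + 1 := by
      push_cast [Nat.cast_sub hcn]; ring
    have hsum : ∑ C ∈ P, H C = (∑ x ∈ S, H {x}) + H B := by
      rw [hPdef, Finset.sum_union (by simp [hBnotim]), Finset.sum_image hinj,
        Finset.sum_singleton]
    have hH1 : ∀ x ∈ S, H {x} = Real.log q := by
      intro x hx
      rw [hH _ (Finset.singleton_nonempty x), Finset.card_singleton, Nat.cast_one,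
        min_eq_left (by exact_mod_cast hk1), one_mul]
    have hHB : H B = min ((n : ℝ) - A.card + 1) (k : ℝ) * Real.log q := by
      rw [hH _ ⟨a, haB⟩, hBcard, hcast]
    have hHV : H Finset.univ = (k : ℝ) * Real.log q := by
      rw [hH _ ⟨a, Finset.mem_univ a⟩]
      have h1 : ((Finset.univ : Finset (Fin n)).card : ℝ) = n := by simp
      rw [h1, min_eq_right (by exact_mod_cast hkn)]
    have hsum' : ∑ C ∈ P, H C
        = ((A.card : ℝ) - 1) * Real.log q
          + min ((n : ℝ) - A.card + 1) (k : ℝ) * Real.log q := by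
      rw [hsum, Finset.sum_congr rfl hH1, Finset.sum_const, hHB, hScard, nsmul_eq_mul]
      have : ((A.card - 1 : ℕ) : ℝ) = (A.card : ℝ) - 1 := by
        push_cast [Nat.cast_sub (by omega : 1 ≤ A.card)]; ring
      rw [this]
    have hden : (P.card : ℝ) - 1 = (A.card : ℝ) - 1 := by rw [hPcard]
    have hdpos : (0 : ℝ) < (A.card : ℝ) - 1 := by
      have : (2 : ℝ) ≤ (A.card : ℝ) := by exact_mod_cast hA
      linarith
    by_cases hcase : k ≤ (n - A.card) + 1
    · rw [if_pos hcase]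
      have hmin : min ((n : ℝ) - A.card + 1) (k : ℝ) = k :=
        min_eq_right (by rw [← hcast]; exact_mod_cast hcase)
      rw [hsum', hHV, hden, hmin]
      have : ((A.card : ℝ) - 1) * Real.log q + (k : ℝ) * Real.log q - (k : ℝ) * Real.log q
          = ((A.card : ℝ) - 1) * Real.log q := by ring
      rw [this, mul_comm, mul_div_assoc, div_self (ne_of_gt hdpos), mul_one]
    · rw [if_neg hcase]
      have hmin : min ((n : ℝ) - A.card + 1) (k : ℝ) = (n : ℝ) - A.card + 1 :=
        min_eq_left (by rw [← hcast]; exact_mod_cast (by omega : n - A.card + 1 ≤ k))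
      rw [hsum', hHV, hden, hmin]
      have : ((A.card : ℝ) - 1) * Real.log q + ((n : ℝ) - A.card + 1) * Real.log q
          - (k : ℝ) * Real.log q = ((n : ℝ) - k) * Real.log q := by ring
      rw [this, mul_div_right_comm]
end
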